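/- arXiv:1804.01834 — 8 statements merged into one kernel-verified Lean document; each statement's English description precedes it below -/
import Mathlib

section
/- Let $m > 1$, $\lambda > 0$, and let $g : \{t, t+1, \dots, T\} \to \mathbb{R}_{>0}$ be channel gains. Define $G(T+1) = 0$ and recursively $G(s) = \big(g(s)^{1/(m-1)} + G(s+1)^{1/(m-1)}\big)^{m-1}$ for $s \le T$. Then for any initial energy $E > 0$, the maximum of $\sum_{s=t}^{T} (g(s) p(s)/\lambda)^{1/m}$ over nonnegative power allocations $p(t),\dots,p(T)$ with $\sum_{s=t}^T p(s) \le E$ equals $(E \, G(t) / \lambda)^{1/m}$. -/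
/-!
Unrolling the recursion gives `G s = (∑_{u = s}^T g u ^ (1/(m-1))) ^ (m-1)`. Hölder's inequality
with the conjugate exponents `m/(m-1)` and `m`, applied to `(g/λ)^(1/m)` and `p^(1/m)`, bounds the
throughput by `(E G(t) / λ)^(1/m)`, and the allocation `p ∝ g^(1/(m-1))` using all of `E` attains
the bound.
-/

open Real Set

theorem eq_rpow_sum_of_rpow_recursion {q : ℝ} (hq : q ≠ 0) {a G : ℕ → ℝ} {t T : ℕ}
    (ha : ∀ s, t ≤ s → s ≤ T → 0 ≤ a s) (hGT : G (T + 1) = 0)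
    (hG : ∀ s, t ≤ s → s ≤ T → G s = (a s + G (s + 1) ^ (1 / q)) ^ q)
    {s : ℕ} (hts : t ≤ s) (hsT : s ≤ T + 1) :
    G s = (∑ u ∈ Finset.Icc s T, a u) ^ q := by
  induction hsT using Nat.decreasingInduction with
  | self => simp [hGT, zero_rpow hq]
  | of_succ s hs ih =>
    have hsum : 0 ≤ ∑ u ∈ Finset.Icc (s + 1) T, a u :=
      Finset.sum_nonneg fun u hu => ha u (by grind) (by grind)
    rw [hG s hts (by omega), ih (by omega), ← rpow_mul hsum, mul_one_div_cancel hq, rpow_one,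
      ← Finset.insert_Icc_add_one_left_eq_Icc (by omega : s ≤ T),
      Finset.sum_insert (by simp)]

theorem sum_div_rpow_rpow {ι : Type*} (s : Finset ι) {w : ι → ℝ} (hw : ∀ i ∈ s, 0 ≤ w i)
    {c q : ℝ} (hc : 0 ≤ c) (hq : q ≠ 0) :
    (∑ i ∈ s, (w i / c) ^ (1 / q)) ^ q = (∑ i ∈ s, w i ^ (1 / q)) ^ q / c := by
  have hsum : 0 ≤ ∑ i ∈ s, w i ^ (1 / q) := Finset.sum_nonneg fun i hi => rpow_nonneg (hw i hi) _
  rw [Finset.sum_congr rfl fun i hi => div_rpow (hw i hi) hc _, ← Finset.sum_div,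
    div_rpow hsum (rpow_nonneg hc _), one_div, rpow_inv_rpow hc hq]

theorem sum_rpow_mul_le {ι : Type*} (s : Finset ι) {w p : ι → ℝ} {m : ℝ} (hm : 1 < m)
    (hw : ∀ i ∈ s, 0 ≤ w i) (hp : ∀ i ∈ s, 0 ≤ p i) :
    ∑ i ∈ s, (w i * p i) ^ (1 / m)
      ≤ ((∑ i ∈ s, p i) * (∑ i ∈ s, w i ^ (1 / (m - 1))) ^ (m - 1)) ^ (1 / m) := by
  have hm0 : 0 < m := by linarith
  have hm1 : 0 < m - 1 := by linarith
  have hconj : (m / (m - 1)).HolderConjugate m := by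
    rw [Real.holderConjugate_iff]
    refine ⟨by rw [lt_div_iff₀ hm1]; linarith, by field_simp; ring⟩
  have holder := inner_le_Lp_mul_Lq_of_nonneg s hconj
    (fun i hi => rpow_nonneg (hw i hi) (1 / m)) (fun i hi => rpow_nonneg (hp i hi) (1 / m))
  have hw' : ∀ i ∈ s, (w i ^ (1 / m)) ^ (m / (m - 1)) = w i ^ (1 / (m - 1)) := fun i hi => by
    rw [← rpow_mul (hw i hi)]; congr 1; field_simp
  have hp' : ∀ i ∈ s, (p i ^ (1 / m)) ^ m = p i := fun i hi => by
    rw [← rpow_mul (hp i hi), one_div_mul_cancel hm0.ne', rpow_one]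
  rw [Finset.sum_congr rfl hw', Finset.sum_congr rfl hp'] at holder
  calc ∑ i ∈ s, (w i * p i) ^ (1 / m)
      = ∑ i ∈ s, w i ^ (1 / m) * p i ^ (1 / m) :=
        Finset.sum_congr rfl fun i hi => mul_rpow (hw i hi) (hp i hi)
    _ ≤ _ := holder
    _ = _ := by
      have hS : 0 ≤ ∑ i ∈ s, w i ^ (1 / (m - 1)) :=
        Finset.sum_nonneg fun i hi => rpow_nonneg (hw i hi) _
      rw [mul_rpow (Finset.sum_nonneg hp) (rpow_nonneg hS _), ← rpow_mul hS, mul_comm]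
      congr 2
      field_simp

theorem sum_rpow_mul_proportional_alloc {ι : Type*} (s : Finset ι) {w : ι → ℝ} {m E : ℝ}
    (hm : 1 < m) (hw : ∀ i ∈ s, 0 ≤ w i) (hS : 0 < ∑ i ∈ s, w i ^ (1 / (m - 1))) (hE : 0 ≤ E) :
    ∑ i ∈ s, (w i * (E * w i ^ (1 / (m - 1)) / ∑ j ∈ s, w j ^ (1 / (m - 1)))) ^ (1 / m)
      = (E * (∑ i ∈ s, w i ^ (1 / (m - 1))) ^ (m - 1)) ^ (1 / m) := by
  set S := ∑ i ∈ s, w i ^ (1 / (m - 1))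
  have hm0 : 0 < m := by linarith
  have hm1 : m - 1 ≠ 0 := by linarith
  have hES : 0 ≤ E / S := div_nonneg hE hS.le
  have hterm : ∀ i ∈ s, (w i * (E * w i ^ (1 / (m - 1)) / S)) ^ (1 / m)
      = (E / S) ^ (1 / m) * w i ^ (1 / (m - 1)) := fun i hi => by
    have hwi := hw i hi
    have hpow : w i * (E * w i ^ (1 / (m - 1)) / S) = E / S * w i ^ (m / (m - 1)) := by
      rw [show m / (m - 1) = 1 + 1 / (m - 1) by field_simp; ring,
        rpow_add' hwi (by positivity), rpow_one]
      ring
    rw [hpow, mul_rpow hES (rpow_nonneg hwi _), ← rpow_mul hwi]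
    congr 2
    field_simp
  have hSm : E * S ^ (m - 1) = E / S * S ^ m := by
    rw [rpow_sub_one hS.ne']; field_simp
  rw [Finset.sum_congr rfl hterm, ← Finset.mul_sum, hSm, mul_rpow hES (rpow_nonneg hS.le _),
    ← rpow_mul hS.le, mul_one_div_cancel hm0.ne', rpow_one]

theorem isGreatest_sum_rpow_mul {ι : Type*} (s : Finset ι) {w : ι → ℝ} {m E : ℝ}
    (hm : 1 < m) (hw : ∀ i ∈ s, 0 ≤ w i) (hS : 0 < ∑ i ∈ s, w i ^ (1 / (m - 1))) (hE : 0 ≤ E) :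
    IsGreatest {y : ℝ | ∃ p : ι → ℝ, (∀ i ∈ s, 0 ≤ p i) ∧ (∑ i ∈ s, p i) ≤ E ∧
        y = ∑ i ∈ s, (w i * p i) ^ (1 / m)}
      ((E * (∑ i ∈ s, w i ^ (1 / (m - 1))) ^ (m - 1)) ^ (1 / m)) := by
  refine ⟨⟨fun i => E * w i ^ (1 / (m - 1)) / ∑ j ∈ s, w j ^ (1 / (m - 1)),
    fun i hi => by have := hw i hi; positivity, ?_,
    (sum_rpow_mul_proportional_alloc s hm hw hS hE).symm⟩, ?_⟩
  · rw [← Finset.sum_div, ← Finset.mul_sum, mul_div_cancel_right₀ _ hS.ne']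
  · rintro y ⟨p, hp, hpE, rfl⟩
    refine (sum_rpow_mul_le s hm hw hp).trans (rpow_le_rpow ?_ ?_ (by positivity))
    · exact mul_nonneg (Finset.sum_nonneg hp) (rpow_nonneg hS.le _)
    · exact mul_le_mul_of_nonneg_right hpE (rpow_nonneg hS.le _)

theorem stmt_2 (m lam E : ℝ) (t T : ℕ) (g G : ℕ → ℝ)
    (hm : 1 < m) (hlam : 0 < lam) (hE : 0 < E) (htT : t ≤ T)
    (hg : ∀ s, t ≤ s → s ≤ T → 0 < g s)
    (hGT : G (T + 1) = 0)
    (hG : ∀ s, t ≤ s → s ≤ T →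
      G s = (g s ^ (1 / (m - 1)) + G (s + 1) ^ (1 / (m - 1))) ^ (m - 1)) :
    IsGreatest
      {y : ℝ | ∃ p : ℕ → ℝ, (∀ s ∈ Finset.Icc t T, 0 ≤ p s) ∧
        (∑ s ∈ Finset.Icc t T, p s) ≤ E ∧
        y = ∑ s ∈ Finset.Icc t T, (g s * p s / lam) ^ (1 / m)}
      ((E * G t / lam) ^ (1 / m)) := by
  have hgI : ∀ s ∈ Finset.Icc t T, 0 < g s := fun s hs =>
    hg s (Finset.mem_Icc.1 hs).1 (Finset.mem_Icc.1 hs).2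
  have hGt : G t = (∑ s ∈ Finset.Icc t T, g s ^ (1 / (m - 1))) ^ (m - 1) :=
    eq_rpow_sum_of_rpow_recursion (by linarith)
      (fun s hts hsT => (rpow_pos_of_pos (hg s hts hsT) _).le) hGT hG le_rfl (by omega)
  have hS : 0 < ∑ s ∈ Finset.Icc t T, (g s / lam) ^ (1 / (m - 1)) :=
    Finset.sum_pos (fun s hs => rpow_pos_of_pos (div_pos (hgI s hs) hlam) _)
      ⟨t, Finset.mem_Icc.2 ⟨le_rfl, htT⟩⟩
  simp_rw [mul_div_right_comm (g _)]
  rw [hGt, mul_div_assoc, ← sum_div_rpow_rpow _ (fun s hs => (hgI s hs).le) hlam.le (by linarith)]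
  exact isGreatest_sum_rpow_mul _ hm (fun s hs => (div_pos (hgI s hs) hlam).le) hS hE.le
end

section
/- Let $m > 1$, $g : \{t,\dots,T\} \to \mathbb{R}_{>0}$, $G$ as defined by the backward recursion $G(T+1)=0$, $G(s) = (g(s)^{1/(m-1)} + G(s+1)^{1/(m-1)})^{m-1}$. Then the allocation defined forward by $E(t) = E$, $p^*(s) = \frac{g(s)^{1/(m-1)}}{g(s)^{1/(m-1)} + G(s+1)^{1/(m-1)}} E(s)$, $E(s+1) = E(s) - p^*(s)$, satisfies $p^*(s) \in [0, E(s)]$ for all $s$ and achieves total throughput $\sum_{s=t}^T (g(s)p^*(s)/\lambda)^{1/m} = (E\, G(t)/\lambda)^{1/m}$. -/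
open Real Set

theorem stmt_3 (m lam E : ℝ) (t T : ℕ) (g G Ebat pstar : ℕ → ℝ)
    (hm : 1 < m) (hlam : 0 < lam) (hE : 0 < E) (htT : t ≤ T)
    (hg : ∀ s, t ≤ s → s ≤ T → 0 < g s)
    (hGT : G (T + 1) = 0)
    (hG : ∀ s, t ≤ s → s ≤ T →
      G s = (g s ^ (1 / (m - 1)) + G (s + 1) ^ (1 / (m - 1))) ^ (m - 1))
    (hEt : Ebat t = E)
    (hp : ∀ s, t ≤ s → s ≤ T →
      pstar s = g s ^ (1 / (m - 1)) /
        (g s ^ (1 / (m - 1)) + G (s + 1) ^ (1 / (m - 1))) * Ebat s)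
    (hEdyn : ∀ s, t ≤ s → s ≤ T → Ebat (s + 1) = Ebat s - pstar s) :
    (∀ s ∈ Finset.Icc t T, pstar s ∈ Set.Icc 0 (Ebat s)) ∧
    (∑ s ∈ Finset.Icc t T, (g s * pstar s / lam) ^ (1 / m)) =
      (E * G t / lam) ^ (1 / m) := by
  have hm0 : (0 : ℝ) < m := by linarith
  have hm1 : m - 1 ≠ 0 := by intro h; linarith [sub_eq_zero.mp h]
  -- G is positive on [t, T]
  have hGpos : ∀ j s, s + j = T + 1 → t ≤ s → s ≤ T → 0 < G s := by
    intro j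
    induction j with
    | zero => intro s h1 _ h3; omega
    | succ j ih =>
      intro s h1 h2 h3
      have hA : 0 < g s ^ (1 / (m - 1)) := Real.rpow_pos_of_pos (hg s h2 h3) _
      have hB : 0 ≤ G (s + 1) ^ (1 / (m - 1)) := by
        apply Real.rpow_nonneg
        rcases eq_or_lt_of_le h3 with h | h
        · rw [h, hGT]
        · exact (ih (s + 1) (by omega) (by omega) (by omega)).le
      rw [hG s h2 h3]
      exact Real.rpow_pos_of_pos (by linarith) _
  have hGnn1 : ∀ s, t ≤ s → s ≤ T → 0 ≤ G (s + 1) := by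
    intro s hs hsT
    rcases eq_or_lt_of_le hsT with h | h
    · rw [h, hGT]
    · exact (hGpos (T - s) (s + 1) (by omega) (by omega) (by omega)).le
  -- Ebat is nonnegative on [t, T+1]
  have hEnn : ∀ s, t ≤ s → s ≤ T + 1 → 0 ≤ Ebat s := by
    intro s hs
    induction s, hs using Nat.le_induction with
    | base => intro _; rw [hEt]; exact hE.le
    | succ s hs ih =>
      intro hsT
      have hsT' : s ≤ T := by omega
      have he : 0 ≤ Ebat s := ih (by omega)
      have hA : 0 < g s ^ (1 / (m - 1)) := Real.rpow_pos_of_pos (hg s hs hsT') _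
      have hB : 0 ≤ G (s + 1) ^ (1 / (m - 1)) := Real.rpow_nonneg (hGnn1 s hs hsT') _
      have hfrac : g s ^ (1 / (m - 1)) /
          (g s ^ (1 / (m - 1)) + G (s + 1) ^ (1 / (m - 1))) ≤ 1 := by
        rw [div_le_one (by linarith)]; linarith
      rw [hEdyn s hs hsT', hp s hs hsT']
      nlinarith
  -- main backward induction for the sum
  have hsum : ∀ j s, s + j = T + 1 → t ≤ s →
      (∑ u ∈ Finset.Icc s T, (g u * pstar u / lam) ^ (1 / m)) =
        (Ebat s * G s / lam) ^ (1 / m) := by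
    intro j
    induction j with
    | zero =>
      intro s h1 _
      have hs : s = T + 1 := by omega
      subst hs
      rw [Finset.Icc_eq_empty (by omega), Finset.sum_empty, hGT, mul_zero, zero_div,
        Real.zero_rpow (one_div_ne_zero hm0.ne')]
    | succ j ih =>
      intro s h1 h2
      have h3 : s ≤ T := by omega
      set A := g s ^ (1 / (m - 1)) with hAdef
      set B := G (s + 1) ^ (1 / (m - 1)) with hBdef
      have hA : 0 < A := Real.rpow_pos_of_pos (hg s h2 h3) _
      have hB : 0 ≤ B := Real.rpow_nonneg (hGnn1 s h2 h3) _
      have hAB : 0 < A + B := by linarith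
      have he : 0 ≤ Ebat s := hEnn s h2 (by omega)
      have hgA : g s = A ^ (m - 1) := by
        rw [hAdef, ← Real.rpow_mul (hg s h2 h3).le, one_div_mul_cancel hm1, Real.rpow_one]
      have hGB : G (s + 1) = B ^ (m - 1) := by
        rw [hBdef, ← Real.rpow_mul (hGnn1 s h2 h3), one_div_mul_cancel hm1, Real.rpow_one]
      have hGs : G s = (A + B) ^ (m - 1) := hG s h2 h3
      set u := Ebat s / ((A + B) * lam) with hudef
      have hu : 0 ≤ u := div_nonneg he (by positivity)
      have hAm : A ^ m = A ^ (m - 1) * A := by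
        rw [← Real.rpow_add_one hA.ne' (m - 1), sub_add_cancel]
      have hBm : B ^ m = B ^ (m - 1) * B := by
        rcases hB.eq_or_lt with h | h
        · rw [← h, Real.zero_rpow hm0.ne', Real.zero_rpow hm1, mul_zero]
        · rw [← Real.rpow_add_one h.ne' (m - 1), sub_add_cancel]
      have hABm : (A + B) ^ m = (A + B) ^ (m - 1) * (A + B) := by
        rw [← Real.rpow_add_one hAB.ne' (m - 1), sub_add_cancel]
      have hps : pstar s = A / (A + B) * Ebat s := hp s h2 h3
      have hE1 : Ebat (s + 1) = Ebat s - pstar s := hEdyn s h2 h3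
      have T1 : (g s * pstar s / lam) ^ (1 / m) = A * u ^ (1 / m) := by
        have : g s * pstar s / lam = A ^ m * u := by
          rw [hgA, hps, hAm, hudef]; field_simp
        rw [this, Real.mul_rpow (Real.rpow_nonneg hA.le m) hu,
          ← Real.rpow_mul hA.le, mul_one_div_cancel hm0.ne', Real.rpow_one]
      have T2 : (Ebat (s + 1) * G (s + 1) / lam) ^ (1 / m) = B * u ^ (1 / m) := by
        have : Ebat (s + 1) * G (s + 1) / lam = B ^ m * u := by
          rw [hE1, hps, hGB, hBm, hudef]; field_simp; ring
        rw [this, Real.mul_rpow (Real.rpow_nonneg hB m) hu,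
          ← Real.rpow_mul hB, mul_one_div_cancel hm0.ne', Real.rpow_one]
      have T3 : (Ebat s * G s / lam) ^ (1 / m) = (A + B) * u ^ (1 / m) := by
        have : Ebat s * G s / lam = (A + B) ^ m * u := by
          rw [hGs, hABm, hudef]; field_simp
        rw [this, Real.mul_rpow (Real.rpow_nonneg hAB.le m) hu,
          ← Real.rpow_mul hAB.le, mul_one_div_cancel hm0.ne', Real.rpow_one]
      have hsplit : Finset.Icc s T = insert s (Finset.Icc (s + 1) T) := by
        rw [Finset.Icc_add_one_left_eq_Ioc, Finset.Ioc_insert_left h3]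
      rw [hsplit, Finset.sum_insert (by simp), ih (s + 1) (by omega) (by omega),
        T1, T2, T3]
      ring
  constructor
  · intro s hs
    rw [Finset.mem_Icc] at hs
    obtain ⟨h2, h3⟩ := hs
    have hA : 0 < g s ^ (1 / (m - 1)) := Real.rpow_pos_of_pos (hg s h2 h3) _
    have hB : 0 ≤ G (s + 1) ^ (1 / (m - 1)) := Real.rpow_nonneg (hGnn1 s h2 h3) _
    have he : 0 ≤ Ebat s := hEnn s h2 (by omega)
    rw [hp s h2 h3]
    constructor
    · exact mul_nonneg (div_nonneg hA.le (by linarith)) he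
    · have : g s ^ (1 / (m - 1)) /
          (g s ^ (1 / (m - 1)) + G (s + 1) ^ (1 / (m - 1))) ≤ 1 := by
        rw [div_le_one (by linarith)]; linarith
      nlinarith
  · rw [← hEt]
    exact hsum (T + 1 - t) t (by omega) le_rfl
end

section
/- Let $m > 1$, and let $g_1,\dots,g_N > 0$ with probabilities $q_1,\dots,q_N > 0$ summing to $1$. Define the sequence $Q(T) = 0$ with $Q(T-1) = \sum_i q_i g_i^{1/m}$ and, for $t < T-1$, $Q(t) = \sum_i q_i \big(g_i^{1/(m-1)} + Q(t+1)^{m/(m-1)}\big)^{(m-1)/m}$. Then $Q(t) > Q(t+1)$ for all $t \le T-2$, i.e., $Q$ is strictly decreasing in $t$. -/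
open Real

theorem stmt_4 (m : ℝ) (N T : ℕ) (g q : Fin N → ℝ) (Q : ℕ → ℝ)
    (hm : 1 < m) (hg : ∀ i, 0 < g i) (hq : ∀ i, 0 < q i)
    (hsum : ∑ i, q i = 1)
    (hT : 1 ≤ T)
    (hQT : Q T = 0)
    (hQbase : Q (T - 1) = ∑ i, q i * g i ^ (1 / m))
    (hQrec : ∀ t, t + 2 ≤ T →
      Q t = ∑ i, q i * (g i ^ (1 / (m - 1)) + Q (t + 1) ^ (m / (m - 1))) ^ ((m - 1) / m)) :
    ∀ t, t + 2 ≤ T → Q (t + 1) < Q t := by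
  have hm0 : (0:ℝ) < m := lt_trans one_pos hm
  have hm1 : (0:ℝ) < m - 1 := by linarith
  have hnonneg : ∀ d s, s + 1 + d = T → 0 ≤ Q s := by
    intro d
    induction d with
    | zero =>
      intro s hs
      have hsT : s = T - 1 := by omega
      subst hsT
      rw [hQbase]
      exact Finset.sum_nonneg fun i _ =>
        mul_nonneg (hq i).le (Real.rpow_nonneg (hg i).le _)
    | succ d ih =>
      intro s hs
      have h2 : s + 2 ≤ T := by omega
      have hQ1 : 0 ≤ Q (s + 1) := ih (s + 1) (by omega)
      rw [hQrec s h2]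
      refine Finset.sum_nonneg fun i _ => mul_nonneg (hq i).le (Real.rpow_nonneg ?_ _)
      have h3 := Real.rpow_nonneg hQ1 (m / (m - 1))
      have h4 := Real.rpow_nonneg (hg i).le (1 / (m - 1))
      linarith
  intro t ht
  have hc : 0 ≤ Q (t + 1) := hnonneg (T - (t + 2)) (t + 1) (by omega)
  have hne : (Finset.univ : Finset (Fin N)).Nonempty := by
    rcases Nat.eq_zero_or_pos N with h | h
    · subst h; simp at hsum
    · exact ⟨⟨0, h⟩, Finset.mem_univ _⟩
  rw [hQrec t ht]
  calc Q (t + 1) = ∑ i, q i * Q (t + 1) := by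
        rw [← Finset.sum_mul, hsum, one_mul]
    _ < ∑ i, q i * (g i ^ (1 / (m - 1)) + Q (t + 1) ^ (m / (m - 1))) ^ ((m - 1) / m) := by
        apply Finset.sum_lt_sum_of_nonempty hne
        intro i _
        apply mul_lt_mul_of_pos_left _ (hq i)
        have h1 : (Q (t + 1) ^ (m / (m - 1))) ^ ((m - 1) / m) = Q (t + 1) := by
          rw [← Real.rpow_mul hc,
            show m / (m - 1) * ((m - 1) / m) = 1 by field_simp,
            Real.rpow_one]
        have hgp : 0 < g i ^ (1 / (m - 1)) := Real.rpow_pos_of_pos (hg i) _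
        calc Q (t + 1) = (Q (t + 1) ^ (m / (m - 1))) ^ ((m - 1) / m) := h1.symm
          _ < (g i ^ (1 / (m - 1)) + Q (t + 1) ^ (m / (m - 1))) ^ ((m - 1) / m) :=
            Real.rpow_lt_rpow (Real.rpow_nonneg hc _) (by linarith) (div_pos hm1 hm0)
end

section
/- With $Q$ defined by the backward recursion $Q(T-1) = \sum_i q_i g_i^{1/m}$ and $Q(t) = \sum_i q_i (g_i^{1/(m-1)} + Q(t+1)^{m/(m-1)})^{(m-1)/m}$ for $t \le T-2$ (with $g_i > 0$, $q_i > 0$, $\sum_i q_i = 1$, $m > 1$), the ratio $Q(t-1)/Q(t)$ is strictly increasing in $t$: for all applicable $k$, $\frac{Q(T-k-1)}{Q(T-k)} < \frac{Q(T-k)}{Q(T-k+1)}$. -/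
open Real

theorem stmt_5 (m : ℝ) (N T : ℕ) (g q : Fin N → ℝ) (Q : ℕ → ℝ)
    (hm : 1 < m) (hg : ∀ i, 0 < g i) (hq : ∀ i, 0 < q i)
    (hsum : ∑ i, q i = 1)
    (hT : 1 ≤ T)
    (hQbase : Q (T - 1) = ∑ i, q i * g i ^ (1 / m))
    (hQrec : ∀ t, t + 2 ≤ T →
      Q t = ∑ i, q i * (g i ^ (1 / (m - 1)) + Q (t + 1) ^ (m / (m - 1))) ^ ((m - 1) / m)) :
    ∀ t, t + 3 ≤ T → Q t / Q (t + 1) < Q (t + 1) / Q (t + 2) := by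
  have hm0 : (0:ℝ) < m := lt_trans one_pos hm
  have hm1 : (0:ℝ) < m - 1 := by linarith
  have hp : (0:ℝ) < m / (m - 1) := div_pos hm0 hm1
  have hr : (0:ℝ) < (m - 1) / m := div_pos hm1 hm0
  have hpr : (m / (m - 1)) * ((m - 1) / m) = 1 := by field_simp
  have hN : 0 < N := by
    by_contra h
    push_neg at h
    interval_cases N
    simp at hsum
  haveI : Nonempty (Fin N) := ⟨⟨0, hN⟩⟩
  have hxid : ∀ x : ℝ, 0 < x → (x ^ (m / (m-1))) ^ ((m-1)/m) = x := by
    intro x hx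
    rw [← Real.rpow_mul hx.le, hpr, Real.rpow_one]
  -- f(x) > x
  have hgrow : ∀ x : ℝ, 0 < x →
      x < ∑ i, q i * (g i ^ (1/(m-1)) + x ^ (m/(m-1))) ^ ((m-1)/m) := by
    intro x hx
    have hid : ∑ i, q i * x = x := by rw [← Finset.sum_mul, hsum, one_mul]
    calc x = ∑ i, q i * x := hid.symm
    _ < ∑ i, q i * (g i ^ (1/(m-1)) + x ^ (m/(m-1))) ^ ((m-1)/m) := by
        apply Finset.sum_lt_sum_of_nonempty Finset.univ_nonempty
        intro i _
        apply mul_lt_mul_of_pos_left _ (hq i)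
        calc x = (x ^ (m/(m-1))) ^ ((m-1)/m) := (hxid x hx).symm
        _ < (g i ^ (1/(m-1)) + x ^ (m/(m-1))) ^ ((m-1)/m) := by
            apply Real.rpow_lt_rpow (Real.rpow_nonneg hx.le _) _ hr
            have := Real.rpow_pos_of_pos (hg i) (1/(m-1))
            linarith
  -- positivity of Q
  have hpos : ∀ d s, s + 1 + d = T → 0 < Q s := by
    intro d
    induction d with
    | zero =>
      intro s hs
      have hsT : s = T - 1 := by omega
      rw [hsT, hQbase]
      apply Finset.sum_pos _ Finset.univ_nonempty
      intro i _
      exact mul_pos (hq i) (Real.rpow_pos_of_pos (hg i) _)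
    | succ d ih =>
      intro s hs
      have h1 : 0 < Q (s+1) := ih (s+1) (by omega)
      rw [hQrec s (by omega)]
      apply Finset.sum_pos _ Finset.univ_nonempty
      intro i _
      refine mul_pos (hq i) (Real.rpow_pos_of_pos ?_ _)
      have h2 := Real.rpow_pos_of_pos (hg i) (1/(m-1))
      have h3 := Real.rpow_pos_of_pos h1 (m/(m-1))
      linarith
  have hposs : ∀ s, s + 1 ≤ T → 0 < Q s := fun s hs => hpos (T - (s+1)) s (by omega)
  -- f(x)*y < f(y)*x for 0 < y < x
  have hmono : ∀ x y : ℝ, 0 < y → y < x →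
      (∑ i, q i * (g i ^ (1/(m-1)) + x ^ (m/(m-1))) ^ ((m-1)/m)) * y <
      (∑ i, q i * (g i ^ (1/(m-1)) + y ^ (m/(m-1))) ^ ((m-1)/m)) * x := by
    intro x y hy hyx
    have hx : 0 < x := lt_trans hy hyx
    rw [Finset.sum_mul, Finset.sum_mul]
    apply Finset.sum_lt_sum_of_nonempty Finset.univ_nonempty
    intro i _
    rw [mul_assoc, mul_assoc]
    apply mul_lt_mul_of_pos_left _ (hq i)
    have hgp : 0 < g i ^ (1/(m-1)) := Real.rpow_pos_of_pos (hg i) _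
    have hxp : 0 < x ^ (m/(m-1)) := Real.rpow_pos_of_pos hx _
    have hyp : 0 < y ^ (m/(m-1)) := Real.rpow_pos_of_pos hy _
    calc (g i ^ (1/(m-1)) + x ^ (m/(m-1))) ^ ((m-1)/m) * y
        = ((g i ^ (1/(m-1)) + x ^ (m/(m-1))) * y ^ (m/(m-1))) ^ ((m-1)/m) := by
          rw [Real.mul_rpow (by positivity) hyp.le, hxid y hy]
      _ < ((g i ^ (1/(m-1)) + y ^ (m/(m-1))) * x ^ (m/(m-1))) ^ ((m-1)/m) := by
          apply Real.rpow_lt_rpow (by positivity) _ hr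
          have hlt : y ^ (m/(m-1)) < x ^ (m/(m-1)) := Real.rpow_lt_rpow hy.le hyx hp
          nlinarith [mul_lt_mul_of_pos_left hlt hgp]
      _ = (g i ^ (1/(m-1)) + y ^ (m/(m-1))) ^ ((m-1)/m) * x := by
          rw [Real.mul_rpow (by positivity) hxp.le, hxid x hx]
  intro t ht
  have ha : 0 < Q (t+2) := hposs (t+2) (by omega)
  have h2 : Q (t+1) = ∑ i, q i * (g i ^ (1/(m-1)) + Q (t+2) ^ (m/(m-1))) ^ ((m-1)/m) :=
    hQrec (t+1) (by omega)
  have hb : 0 < Q (t+1) := hposs (t+1) (by omega)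
  have hab : Q (t+2) < Q (t+1) := by
    rw [h2]; exact hgrow _ ha
  rw [div_lt_div_iff₀ hb ha]
  calc Q t * Q (t+2)
      = (∑ i, q i * (g i ^ (1/(m-1)) + Q (t+1) ^ (m/(m-1))) ^ ((m-1)/m)) * Q (t+2) := by
        rw [hQrec t (by omega)]
    _ < (∑ i, q i * (g i ^ (1/(m-1)) + Q (t+2) ^ (m/(m-1))) ^ ((m-1)/m)) * Q (t+1) :=
        hmono (Q (t+1)) (Q (t+2)) ha hab
    _ = Q (t+1) * Q (t+1) := by rw [← h2]
end

section
/- Let $e_i, q_i, m$ be as in the stopping-threshold setup, and let $1 < c_1 < c_2$. If $\gamma_1, \gamma_2 > 0$ satisfy $\sum_i q_i(1 + e_i/\gamma_j)^{1/m} = c_j$ for $j=1,2$, then $\gamma_2 < \gamma_1$. Consequently, since $Q(t-1)/Q(t) < Q(t)/Q(t+1)$, the stopping thresholds satisfy $\gamma(t) > \gamma(t+1)$, i.e., the thresholds are strictly decreasing in time. -/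
open Real

theorem stmt_7 (m c₁ c₂ γ₁ γ₂ : ℝ) (N : ℕ) (e q : Fin N → ℝ)
    (hm : 1 < m) (he : ∀ i, 0 < e i) (hq : ∀ i, 0 < q i) (hsum : ∑ i, q i = 1)
    (hc₁ : 1 < c₁) (hc : c₁ < c₂)
    (hγ₁ : 0 < γ₁) (hγ₂ : 0 < γ₂)
    (heq₁ : ∑ i, q i * (1 + e i / γ₁) ^ (1 / m) = c₁)
    (heq₂ : ∑ i, q i * (1 + e i / γ₂) ^ (1 / m) = c₂) :
    γ₂ < γ₁ := by
  by_contra h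
  push_neg at h
  have key : c₂ ≤ c₁ := by
    rw [← heq₁, ← heq₂]
    apply Finset.sum_le_sum
    intro i _
    apply mul_le_mul_of_nonneg_left _ (hq i).le
    have h1 := he i
    apply Real.rpow_le_rpow
    · positivity
    · have : e i / γ₂ ≤ e i / γ₁ :=
        div_le_div_of_nonneg_left (he i).le hγ₁ h
      linarith
    · positivity
  linarith
end

section
/- Let $m > 1$, $g_i > 0$ with probabilities $q_i > 0$, $\sum_i q_i = 1$, and let $Q(t)$ satisfy the backward recursion $Q(T-1) = \sum_i q_i g_i^{1/m}$, $Q(t) = \sum_i q_i(g_i^{1/(m-1)} + Q(t+1)^{m/(m-1)})^{(m-1)/m}$. Define the value functions $V(E, g, T) = (gE/\lambda)^{1/m}$ and, for $t < T$, $V(E, g, t) = \max_{\alpha \in [0,1]} \big[(g\alpha E/\lambda)^{1/m} + \sum_i q_i V((1-\alpha)E, g_i, t+1)\big]$. Then for all $t \le T-1$, $E \ge 0$, and $g > 0$: $V(E, g, t) = (E/\lambda)^{1/m}\big(g^{1/(m-1)} + Q(t)^{m/(m-1)}\big)^{(m-1)/m}$, attained by $\alpha^*(t) = \frac{g^{1/(m-1)}}{g^{1/(m-1)}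 + Q(t)^{m/(m-1)}}$. -/
/-!
By backward induction, the expected continuation value `∑ i, q i * V E (g i) (t + 1)` equals
`Q t * (E / λ) ^ (1 / m)`. The Bellman objective at `α` is then
`(E / λ) ^ (1 / m) * (g ^ (1 / m) * α ^ (1 / m) + Q t * (1 - α) ^ (1 / m))`, and Hölder's inequality
for the conjugate exponents `m / (m - 1)` and `m` bounds the bracket by
`(g ^ (1 / (m - 1)) + Q t ^ (m / (m - 1))) ^ ((m - 1) / m)`, with equality at the weight `α*`
that makes `(α, 1 - α)` proportional to `(g ^ (1 / (m - 1)), Q t ^ (m / (m - 1)))`.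
This closed form in turn makes the continuation value at `t - 1` linear in `(E / λ) ^ (1 / m)`,
with coefficient given by the recursion for `Q`.
-/

open Real Set

namespace Real

theorem mul_rpow_add_mul_one_sub_rpow_le {p q A B α : ℝ} (hpq : p.HolderConjugate q)
    (hA : 0 ≤ A) (hB : 0 ≤ B) (hα : α ∈ Icc (0 : ℝ) 1) :
    A * α ^ (1 / q) + B * (1 - α) ^ (1 / q) ≤ (A ^ p + B ^ p) ^ (1 / p) := by
  obtain ⟨hα0, hα1⟩ := hα
  have h1α : 0 ≤ 1 - α := sub_nonneg.mpr hα1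
  have H := inner_le_Lp_mul_Lq_of_nonneg (s := Finset.univ) hpq (f := ![A, B])
    (g := ![α ^ (1 / q), (1 - α) ^ (1 / q)])
    (fun i _ => by fin_cases i <;> simp [hA, hB])
    (fun i _ => by fin_cases i <;> simp [rpow_nonneg, hα0, h1α])
  simpa [Fin.sum_univ_two, rpow_inv_rpow, hα0, h1α, hpq.symm.ne_zero] using H

theorem mul_rpow_add_mul_one_sub_rpow_eq {p q A B : ℝ} (hpq : p.HolderConjugate q)
    (hA : 0 ≤ A) (hB : 0 ≤ B) (hS : 0 < A ^ p + B ^ p) :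
    A * (A ^ p / (A ^ p + B ^ p)) ^ (1 / q)
        + B * (1 - A ^ p / (A ^ p + B ^ p)) ^ (1 / q) = (A ^ p + B ^ p) ^ (1 / p) := by
  set S := A ^ p + B ^ p
  have hweight : ∀ x, 0 ≤ x → x * (x ^ p / S) ^ (1 / q) = x ^ p / S ^ (1 / q) := by
    intro x hx
    have hexp : 1 + p * (1 / q) = p := by
      have := hpq.div_conj_eq_sub_one; rw [mul_one_div]; linarith
    rw [div_rpow (rpow_nonneg hx p) hS.le, ← rpow_mul hx, ← mul_div_assoc,
      ← rpow_one_add' hx (by rw [hexp]; exact hpq.ne_zero), hexp]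
  have hB' : 1 - A ^ p / S = B ^ p / S := by
    rw [eq_div_iff hS.ne', sub_mul, div_mul_cancel₀ _ hS.ne']; ring
  have hconj : 1 - 1 / q = 1 / p := by simpa using hpq.symm.one_sub_inv
  rw [hB', hweight A hA, hweight B hB, ← add_div,
    ← rpow_one_sub' hS.le (by rw [hconj]; exact hpq.one_div_ne_zero), hconj]

end Real

theorem bellman_objective_eq {m lam gc E C α : ℝ} {W : ℝ → ℝ} (hlam : 0 < lam) (hgc : 0 ≤ gc)
    (hE : 0 ≤ E) (hW : ∀ E', 0 ≤ E' → W E' = C * (E' / lam) ^ (1 / m)) (hα : α ∈ Icc (0 : ℝ) 1) :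
    (gc * α * E / lam) ^ (1 / m) + W ((1 - α) * E) =
      (E / lam) ^ (1 / m) * (gc ^ (1 / m) * α ^ (1 / m) + C * (1 - α) ^ (1 / m)) := by
  obtain ⟨hα0, hα1⟩ := hα
  have h1α : 0 ≤ 1 - α := sub_nonneg.mpr hα1
  have hElam : 0 ≤ E / lam := div_nonneg hE hlam.le
  rw [hW _ (mul_nonneg h1α hE), mul_div_assoc, mul_div_assoc, mul_assoc,
    mul_rpow hgc (mul_nonneg hα0 hElam), mul_rpow hα0 hElam, mul_rpow h1α hElam]
  ring

theorem bellman_step {m lam gc E C : ℝ} {W : ℝ → ℝ} (hm : 1 < m) (hlam : 0 < lam) (hgc : 0 < gc)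
    (hC : 0 ≤ C) (hE : 0 ≤ E) (hW : ∀ E', 0 ≤ E' → W E' = C * (E' / lam) ^ (1 / m)) :
    IsGreatest ((fun α : ℝ => (gc * α * E / lam) ^ (1 / m) + W ((1 - α) * E)) '' Icc 0 1)
        ((E / lam) ^ (1 / m) * (gc ^ (1 / (m - 1)) + C ^ (m / (m - 1))) ^ ((m - 1) / m)) ∧
      (fun α : ℝ => (gc * α * E / lam) ^ (1 / m) + W ((1 - α) * E))
          (gc ^ (1 / (m - 1)) / (gc ^ (1 / (m - 1)) + C ^ (m / (m - 1)))) =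
        (E / lam) ^ (1 / m) * (gc ^ (1 / (m - 1)) + C ^ (m / (m - 1))) ^ ((m - 1) / m) := by
  have hpq : (m / (m - 1)).HolderConjugate m := (HolderConjugate.conjExponent hm).symm
  have hA : (gc ^ (1 / m)) ^ (m / (m - 1)) = gc ^ (1 / (m - 1)) := by
    rw [← rpow_mul hgc.le]
    congr 1
    field_simp [hpq.ne_zero, hpq.symm.ne_zero]
  have hexp : 1 / (m / (m - 1)) = (m - 1) / m := one_div_div _ _
  have hS : 0 < gc ^ (1 / (m - 1)) + C ^ (m / (m - 1)) :=
    add_pos_of_pos_of_nonneg (rpow_pos_of_pos hgc _) (rpow_nonneg hC _)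
  have hopt := Real.mul_rpow_add_mul_one_sub_rpow_eq hpq (rpow_nonneg hgc.le (1 / m)) hC
    (hA ▸ hS)
  have hle := fun α (hα : α ∈ Icc (0 : ℝ) 1) =>
    Real.mul_rpow_add_mul_one_sub_rpow_le hpq (rpow_nonneg hgc.le (1 / m)) hC hα
  rw [hA, hexp] at hopt hle
  have hmem : gc ^ (1 / (m - 1)) / (gc ^ (1 / (m - 1)) + C ^ (m / (m - 1))) ∈ Icc (0 : ℝ) 1 :=
    ⟨by positivity, div_le_one_of_le₀ (le_add_of_nonneg_right (rpow_nonneg hC _)) hS.le⟩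
  have hobj := fun α (hα : α ∈ Icc (0 : ℝ) 1) => bellman_objective_eq hlam hgc.le hE hW hα
  have hattained := (hobj _ hmem).trans (by rw [hopt])
  refine ⟨⟨⟨_, hmem, hattained⟩, ?_⟩, hattained⟩
  rintro _ ⟨α, hα, rfl⟩
  exact (hobj α hα).trans_le
    (mul_le_mul_of_nonneg_left (hle α hα) (rpow_nonneg (div_nonneg hE hlam.le) _))

theorem expected_value_eq_mul_rpow {m lam : ℝ} {N T : ℕ} {g q : Fin N → ℝ} {Q : ℕ → ℝ}
    {V : ℝ → ℝ → ℕ → ℝ} (hm : 1 < m) (hlam : 0 < lam) (hg : ∀ i, 0 < g i) (hq : ∀ i, 0 ≤ q i)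
    (hQbase : Q (T - 1) = ∑ i, q i * g i ^ (1 / m))
    (hQrec : ∀ t, t + 2 ≤ T →
      Q t = ∑ i, q i * (g i ^ (1 / (m - 1)) + Q (t + 1) ^ (m / (m - 1))) ^ ((m - 1) / m))
    (hVT : ∀ E gc : ℝ, V E gc T = (gc * E / lam) ^ (1 / m))
    (hV : ∀ (E gc : ℝ) (t : ℕ), t < T →
      V E gc t = sSup ((fun α : ℝ =>
        (gc * α * E / lam) ^ (1 / m) + ∑ i, q i * V ((1 - α) * E) (g i) (t + 1)) ''
        Set.Icc 0 1))
    {t : ℕ} (ht : t + 1 ≤ T) :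
    0 ≤ Q t ∧ ∀ E, 0 ≤ E → ∑ i, q i * V E (g i) (t + 1) = Q t * (E / lam) ^ (1 / m) := by
  have hT : 1 ≤ T := by omega
  replace ht : t ≤ T - 1 := by omega
  induction ht using Nat.decreasingInduction with
  | self =>
    refine ⟨hQbase ▸ Finset.sum_nonneg fun i _ => mul_nonneg (hq i) (rpow_nonneg (hg i).le _),
      fun E hE => ?_⟩
    rw [Nat.sub_add_cancel (by omega), hQbase, Finset.sum_mul]
    refine Finset.sum_congr rfl fun i _ => ?_
    rw [hVT, mul_div_assoc, mul_rpow (hg i).le (div_nonneg hE hlam.le), mul_assoc]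
  | of_succ t ht' ih =>
    obtain ⟨hQ, hW⟩ := ih
    refine ⟨hQrec t (by omega) ▸ Finset.sum_nonneg fun i _ => mul_nonneg (hq i) (rpow_nonneg
      (add_nonneg (rpow_nonneg (hg i).le _) (rpow_nonneg hQ _)) _), fun E hE => ?_⟩
    rw [hQrec t (by omega), Finset.sum_mul]
    refine Finset.sum_congr rfl fun i _ => ?_
    rw [hV _ _ _ (by omega), (bellman_step hm hlam (hg i) hQ hE hW).1.csSup_eq]
    ring

theorem stmt_9_general (m lam : ℝ) (N T : ℕ) (g q : Fin N → ℝ) (Q : ℕ → ℝ)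
    (V : ℝ → ℝ → ℕ → ℝ)
    (hm : 1 < m) (hlam : 0 < lam)
    (hg : ∀ i, 0 < g i) (hq : ∀ i, 0 < q i)
    (hQbase : Q (T - 1) = ∑ i, q i * g i ^ (1 / m))
    (hQrec : ∀ t, t + 2 ≤ T →
      Q t = ∑ i, q i * (g i ^ (1 / (m - 1)) + Q (t + 1) ^ (m / (m - 1))) ^ ((m - 1) / m))
    (hVT : ∀ E gc : ℝ, V E gc T = (gc * E / lam) ^ (1 / m))
    (hV : ∀ (E gc : ℝ) (t : ℕ), t < T →
      V E gc t = sSup ((fun α : ℝ =>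
        (gc * α * E / lam) ^ (1 / m) + ∑ i, q i * V ((1 - α) * E) (g i) (t + 1)) ''
        Set.Icc 0 1)) :
    ∀ t, t + 1 ≤ T → ∀ E : ℝ, 0 ≤ E → ∀ gc : ℝ, 0 < gc →
      V E gc t =
        (E / lam) ^ (1 / m) * (gc ^ (1 / (m - 1)) + Q t ^ (m / (m - 1))) ^ ((m - 1) / m) ∧
      (fun α : ℝ =>
        (gc * α * E / lam) ^ (1 / m) + ∑ i, q i * V ((1 - α) * E) (g i) (t + 1))
          (gc ^ (1 / (m - 1)) / (gc ^ (1 / (m - 1)) + Q t ^ (m / (m - 1)))) =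
        V E gc t := by
  intro t ht E hE gc hgc
  obtain ⟨hQ, hW⟩ := expected_value_eq_mul_rpow hm hlam hg (fun i => (hq i).le) hQbase hQrec
    hVT hV ht
  obtain ⟨hmax, hopt⟩ := bellman_step hm hlam hgc hQ hE hW
  have hVt := (hV E gc t ht).trans hmax.csSup_eq
  exact ⟨hVt, hopt.trans hVt.symm⟩

theorem stmt_9 (m lam : ℝ) (N T : ℕ) (g q : Fin N → ℝ) (Q : ℕ → ℝ)
    (V : ℝ → ℝ → ℕ → ℝ)
    (hm : 1 < m) (hlam : 0 < lam)
    (hg : ∀ i, 0 < g i) (hq : ∀ i, 0 < q i) (hsum : ∑ i, q i = 1)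
    (hT : 1 ≤ T)
    (hQbase : Q (T - 1) = ∑ i, q i * g i ^ (1 / m))
    (hQrec : ∀ t, t + 2 ≤ T →
      Q t = ∑ i, q i * (g i ^ (1 / (m - 1)) + Q (t + 1) ^ (m / (m - 1))) ^ ((m - 1) / m))
    (hVT : ∀ E gc : ℝ, V E gc T = (gc * E / lam) ^ (1 / m))
    (hV : ∀ (E gc : ℝ) (t : ℕ), t < T →
      V E gc t = sSup ((fun α : ℝ =>
        (gc * α * E / lam) ^ (1 / m) + ∑ i, q i * V ((1 - α) * E) (g i) (t + 1)) ''
        Set.Icc 0 1)) :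
    ∀ t, t + 1 ≤ T → ∀ E : ℝ, 0 ≤ E → ∀ gc : ℝ, 0 < gc →
      V E gc t =
        (E / lam) ^ (1 / m) * (gc ^ (1 / (m - 1)) + Q t ^ (m / (m - 1))) ^ ((m - 1) / m) ∧
      (fun α : ℝ =>
        (gc * α * E / lam) ^ (1 / m) + ∑ i, q i * V ((1 - α) * E) (g i) (t + 1))
          (gc ^ (1 / (m - 1)) / (gc ^ (1 / (m - 1)) + Q t ^ (m / (m - 1)))) =
        V E gc t :=
  stmt_9_general m lam N T g q Q V hm hlam hg hq hQbase hQrec hVT hV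
end

section
/- Let $m > 1$, $\lambda > 0$, $e_i > 0$ with probabilities $q_i$, and $A > B > 0$ (playing the roles of $Q(t-1)$ and $Q(t)$). Let $\gamma$ be the unique positive solution of $\sum_i q_i(1 + e_i/\gamma)^{1/m} = A/B$. Then for every $E \ge \gamma$: $(E/\lambda)^{1/m} A \ge \sum_i q_i \big((E + e_i)/\lambda\big)^{1/m} B$, and for every $0 < E < \gamma$ the reverse strict inequality holds. -/
open Real

theorem stmt_11 (m lam A B γ : ℝ) (N : ℕ) (e q : Fin N → ℝ)
    (hm : 1 < m) (hlam : 0 < lam)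
    (he : ∀ i, 0 < e i) (hq : ∀ i, 0 < q i) (hsum : ∑ i, q i = 1)
    (hB : 0 < B) (hAB : B < A) (hγ : 0 < γ)
    (heq : ∑ i, q i * (1 + e i / γ) ^ (1 / m) = A / B) :
    (∀ E : ℝ, γ ≤ E →
      ∑ i, q i * ((E + e i) / lam) ^ (1 / m) * B ≤ (E / lam) ^ (1 / m) * A) ∧
    (∀ E : ℝ, 0 < E → E < γ →
      (E / lam) ^ (1 / m) * A < ∑ i, q i * ((E + e i) / lam) ^ (1 / m) * B) := by
  have hm0 : 0 < 1 / m := by positivity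
  have hNe : (Finset.univ : Finset (Fin N)).Nonempty := by
    by_contra h
    rw [Finset.not_nonempty_iff_eq_empty] at h
    rw [h, Finset.sum_empty] at hsum
    norm_num at hsum
  have key : ∀ E : ℝ, 0 < E →
      ∑ i, q i * ((E + e i) / lam) ^ (1 / m) * B
        = (E / lam) ^ (1 / m) * B * ∑ i, q i * (1 + e i / E) ^ (1 / m) := by
    intro E hE
    rw [Finset.mul_sum]
    apply Finset.sum_congr rfl
    intro i _
    have h1 : (E + e i) / lam = (E / lam) * (1 + e i / E) := by
      field_simp
    have h0 : (0:ℝ) ≤ 1 + e i / E := by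
      have := div_nonneg (he i).le hE.le; linarith
    rw [h1, Real.mul_rpow (by positivity) h0]
    ring
  constructor
  · intro E hγE
    have hE : 0 < E := lt_of_lt_of_le hγ hγE
    rw [key E hE]
    have hsum_le : ∑ i, q i * (1 + e i / E) ^ (1 / m) ≤ A / B := by
      rw [← heq]
      apply Finset.sum_le_sum
      intro i _
      have h2 : e i / E ≤ e i / γ := by gcongr; exact (he i).le
      have h0 : (0:ℝ) ≤ 1 + e i / E := by
        have := div_nonneg (he i).le hE.le; linarith
      exact mul_le_mul_of_nonneg_left (Real.rpow_le_rpow h0 (by linarith) hm0.le) (hq i).le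
    calc (E / lam) ^ (1 / m) * B * ∑ i, q i * (1 + e i / E) ^ (1 / m)
        ≤ (E / lam) ^ (1 / m) * B * (A / B) := by
          have hpos : (0:ℝ) ≤ (E / lam) ^ (1 / m) * B := by positivity
          exact mul_le_mul_of_nonneg_left hsum_le hpos
      _ = (E / lam) ^ (1 / m) * A := by field_simp
  · intro E hE hEγ
    rw [key E hE]
    have hsum_lt : A / B < ∑ i, q i * (1 + e i / E) ^ (1 / m) := by
      rw [← heq]
      apply Finset.sum_lt_sum_of_nonempty hNe
      intro i _
      have h2 : e i / γ < e i / E := by gcongr; exact he i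
      have h3 : (1 + e i / γ) ^ (1 / m) < (1 + e i / E) ^ (1 / m) := by
        have h0 : (0:ℝ) ≤ 1 + e i / γ := by
          have := div_nonneg (he i).le hγ.le; linarith
        exact Real.rpow_lt_rpow h0 (by linarith) hm0
      exact mul_lt_mul_of_pos_left h3 (hq i)
    calc (E / lam) ^ (1 / m) * A = (E / lam) ^ (1 / m) * B * (A / B) := by field_simp
      _ < (E / lam) ^ (1 / m) * B * ∑ i, q i * (1 + e i / E) ^ (1 / m) := by
          have hpos : (0:ℝ) < (E / lam) ^ (1 / m) * B :=
            mul_pos (Real.rpow_pos_of_pos (div_pos hE hlam) _) hB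
          exact mul_lt_mul_of_pos_left hsum_lt hpos
end

section
/- Let $m > 1$, $x, y \ge 0$ not both zero, $E > 0$, $\lambda > 0$. Then $\max_{p \in [0,E]} \big[(x^{m-1} p/\lambda)^{1/m} + (y^{m-1}(E-p)/\lambda)^{1/m}\big] = \big(E (x+y)^{m-1}/\lambda\big)^{1/m}$. Equivalently, the map $g \mapsto g^{1/(m-1)}$ linearizes the optimal splitting of energy: the effective gain of two slots with gains $g_1, g_2$ is $\big(g_1^{1/(m-1)} + g_2^{1/(m-1)}\big)^{m-1}$. -/
open Real Set

/-!
Since `(z ^ (m - 1) * c) ^ (1 / m) = c ^ (1 / m) * z ^ (1 - 1 / m)`, the objective is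
`a ^ θ * x ^ (1 - θ) + b ^ θ * y ^ (1 - θ)` with `θ = 1 / m`, `a = p / λ`, `b = (E - p) / λ`.
By the weighted AM-GM inequality applied after normalising `(a, b)` and `(x, y)` to unit sums,
this is at most `(a + b) ^ θ * (x + y) ^ (1 - θ)`, a two-term Hölder inequality, with equality
when `(a, b)` is proportional to `(x, y)`, i.e. at `p = E x / (x + y)`.
-/

namespace Real

theorem rpow_sub_one_mul_rpow_one_div {m z c : ℝ} (hm : m ≠ 0) (hz : 0 ≤ z) (hc : 0 ≤ c) :
    (z ^ (m - 1) * c) ^ (1 / m) = c ^ (1 / m) * z ^ (1 - 1 / m) := by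
  rw [mul_rpow (rpow_nonneg hz _) hc, ← rpow_mul hz, mul_comm]
  congr 2
  field_simp

theorem rpow_mul_rpow_one_sub_self {θ u : ℝ} (hu : 0 ≤ u) : u ^ θ * u ^ (1 - θ) = u := by
  rw [← rpow_add' hu (by rw [add_sub_cancel]; exact one_ne_zero), add_sub_cancel, rpow_one]

theorem rpow_mul_rpow_one_sub_le {θ a c A C : ℝ} (hθ0 : 0 ≤ θ) (hθ1 : θ ≤ 1) (ha : 0 ≤ a)
    (hc : 0 ≤ c) (hA : 0 < A) (hC : 0 < C) :
    a ^ θ * c ^ (1 - θ) ≤ A ^ θ * C ^ (1 - θ) * (θ * (a / A) + (1 - θ) * (c / C)) := by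
  have amgm := geom_mean_le_arith_mean2_weighted hθ0 (sub_nonneg.2 hθ1) (div_nonneg ha hA.le)
    (div_nonneg hc hC.le) (add_sub_cancel θ 1)
  rw [div_rpow ha hA.le, div_rpow hc hC.le] at amgm
  have hAθ : 0 < A ^ θ := rpow_pos_of_pos hA θ
  have hCθ : 0 < C ^ (1 - θ) := rpow_pos_of_pos hC (1 - θ)
  calc a ^ θ * c ^ (1 - θ) = A ^ θ * C ^ (1 - θ) * (a ^ θ / A ^ θ * (c ^ (1 - θ) / C ^ (1 - θ))) := by
        field_simp
    _ ≤ _ := mul_le_mul_of_nonneg_left amgm (by positivity)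

theorem rpow_mul_rpow_one_sub_add_le {θ a b c d : ℝ} (hθ0 : 0 ≤ θ) (hθ1 : θ ≤ 1) (ha : 0 ≤ a)
    (hb : 0 ≤ b) (hc : 0 ≤ c) (hd : 0 ≤ d) (hab : 0 < a + b) (hcd : 0 < c + d) :
    a ^ θ * c ^ (1 - θ) + b ^ θ * d ^ (1 - θ) ≤ (a + b) ^ θ * (c + d) ^ (1 - θ) := by
  calc _ ≤ (a + b) ^ θ * (c + d) ^ (1 - θ) * (θ * (a / (a + b)) + (1 - θ) * (c / (c + d))) +
        (a + b) ^ θ * (c + d) ^ (1 - θ) * (θ * (b / (a + b)) + (1 - θ) * (d / (c + d))) :=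
        add_le_add (rpow_mul_rpow_one_sub_le hθ0 hθ1 ha hc hab hcd)
          (rpow_mul_rpow_one_sub_le hθ0 hθ1 hb hd hab hcd)
    _ = _ := by field_simp; ring

theorem rpow_mul_rpow_one_sub_add_eq_of_mul_eq {θ a b c d : ℝ} (hab : 0 ≤ a + b) (hc : 0 ≤ c)
    (hd : 0 ≤ d) (hcd : 0 < c + d) (h : a * d = b * c) :
    a ^ θ * c ^ (1 - θ) + b ^ θ * d ^ (1 - θ) = (a + b) ^ θ * (c + d) ^ (1 - θ) := by
  set t := (a + b) / (c + d) with ht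
  have ht0 : 0 ≤ t := div_nonneg hab hcd.le
  have hat : a = t * c := by rw [ht]; field_simp; linarith
  have hbt : b = t * d := by rw [ht]; field_simp; linarith
  rw [hat, hbt, ← mul_add, mul_rpow ht0 hc, mul_rpow ht0 hd, mul_rpow ht0 hcd.le, mul_assoc, mul_assoc,
    mul_assoc, rpow_mul_rpow_one_sub_self hc, rpow_mul_rpow_one_sub_self hd,
    rpow_mul_rpow_one_sub_self hcd.le, mul_add]

end Real

theorem stmt_14 (m x y E lam : ℝ) (hm : 1 < m) (hx : 0 ≤ x) (hy : 0 ≤ y)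
    (hxy : ¬(x = 0 ∧ y = 0)) (hE : 0 < E) (hlam : 0 < lam) :
    IsGreatest
      ((fun p : ℝ =>
        (x ^ (m - 1) * p / lam) ^ (1 / m) + (y ^ (m - 1) * (E - p) / lam) ^ (1 / m)) ''
        Set.Icc 0 E)
      ((E * (x + y) ^ (m - 1) / lam) ^ (1 / m)) := by
  have hs : 0 < x + y := by
    rcases hx.lt_or_eq with hx' | rfl
    · linarith
    · exact add_pos_of_nonneg_of_pos le_rfl (hy.lt_of_ne fun h => hxy ⟨rfl, h.symm⟩)
  have hθ0 : 0 ≤ 1 / m := by positivity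
  have hθ1 : 1 / m ≤ 1 := (div_le_one (by linarith)).2 hm.le
  have factor : ∀ {z c : ℝ}, 0 ≤ z → 0 ≤ c →
      (z ^ (m - 1) * c / lam) ^ (1 / m) = (c / lam) ^ (1 / m) * z ^ (1 - 1 / m) :=
    fun hz hc => by
      rw [mul_div_assoc, rpow_sub_one_mul_rpow_one_div (by positivity) hz (by positivity)]
  rw [mul_comm E, factor hs.le hE.le]
  refine ⟨⟨E * x / (x + y), ⟨by positivity, ?_⟩, ?_⟩, ?_⟩
  · rw [div_le_iff₀ hs]
    nlinarith
  · have hp : 0 ≤ E - E * x / (x + y) := by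
      rw [sub_nonneg, div_le_iff₀ hs]
      nlinarith
    dsimp only
    rw [factor hx (by positivity), factor hy hp,
      rpow_mul_rpow_one_sub_add_eq_of_mul_eq (by positivity) hx hy hs (by field_simp; ring),
      ← add_div, add_sub_cancel]
  · rintro _ ⟨p, ⟨hp0, hpE⟩, rfl⟩
    have hpE' : 0 ≤ E - p := sub_nonneg.2 hpE
    dsimp only
    rw [factor hx hp0, factor hy hpE']
    calc _ ≤ (p / lam + (E - p) / lam) ^ (1 / m) * (x + y) ^ (1 - 1 / m) :=
          rpow_mul_rpow_one_sub_add_le hθ0 hθ1 (by positivity) (by positivity) hx hy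
            (by rw [← add_div, add_sub_cancel]; positivity) hs
      _ = _ := by rw [← add_div, add_sub_cancel]
end
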